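/- arXiv:1304.1044 — 2 statements merged into one kernel-verified Lean document; each statement's English description precedes it below -/
import Mathlib

section
/- (Loops in the looptree.) Fix s ∈ [0,1] with Δ_s > 0, and for u ∈ [0, Δ_s] define s_u = inf{ t ∈ [s,1] : f(t) ≤ f(s) − u } (this infimum is over a nonempty set since f(1) = 0 ≤ f(s) − u, and f(s_u) = f(s) − u). Then for all u, u' ∈ [0, Δ_s], d(s_u, s_{u'}) = min(|u − u'|, Δ_s − |u − u'|); in other words, the set {s_u : u ∈ [0, Δ_s]} equipped with d is isometric to a metric circle of length Δ_s. -/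
open Set Filter

/-- The infimum `I_s^t` of `f` over the interval `[s, t]`. -/
noncomputable def infIcc (f : ℝ → ℝ) (s t : ℝ) : ℝ := sInf (f '' Set.Icc s t)

/-- The genealogical relation `s ≼ t` associated with the excursion-type function `f`,
where `fl` is the left-limit function of `f` (with the convention `fl 0 = 0`):
`s ≼ t ↔ s ≤ t ∧ f(s-) ≤ I_s^t`. -/
def Prec (f fl : ℝ → ℝ) (s t : ℝ) : Prop := s ≤ t ∧ fl s ≤ infIcc f s t

/-- The jump `Δ_t = f(t) - f(t-)` of `f` at `t` (with the convention `fl 0 = 0`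
this gives `Δ_0 = 0` for `f 0 = 0`). -/
def jump (f fl : ℝ → ℝ) (t : ℝ) : ℝ := f t - fl t

/-- The position `x_s^t = I_s^t - f(s-)` of the ancestral line of `t` in the loop at `s`. -/
noncomputable def xpos (f fl : ℝ → ℝ) (s t : ℝ) : ℝ := infIcc f s t - fl s

/-- Distance on the cycle of length `D`: `δ_D(a,b) = min (|a-b|, D - |a-b|)`. -/
def cycleDist (D a b : ℝ) : ℝ := min |a - b| (D - |a - b|)

/-- `d₀(s,t) = ∑_{s ≺ r ≼ t} δ_{Δ_r}(0, x_r^t)`. -/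
noncomputable def dZero (f fl : ℝ → ℝ) (s t : ℝ) : ℝ :=
  ∑' r : {r : ℝ // Prec f fl s r ∧ s ≠ r ∧ Prec f fl r t},
    cycleDist (jump f fl r.1) 0 (xpos f fl r.1 t)

/-- The most recent common ancestor `s ∧ t` of `s` and `t`: the greatest common
`≼`-lower bound of `s` and `t` in `[0,1]`, realized as the supremum of the set of
common lower bounds. -/
noncomputable def mca (f fl : ℝ → ℝ) (s t : ℝ) : ℝ :=
  sSup {r : ℝ | r ∈ Set.Icc (0:ℝ) 1 ∧ Prec f fl r s ∧ Prec f fl r t}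

/-- The looptree pseudo-distance
`d(s,t) = δ_{Δ_{s∧t}}(x_{s∧t}^s, x_{s∧t}^t) + d₀(s∧t, s) + d₀(s∧t, t)`. -/
noncomputable def looptreeDist (f fl : ℝ → ℝ) (s t : ℝ) : ℝ :=
  cycleDist (jump f fl (mca f fl s t)) (xpos f fl (mca f fl s t) s) (xpos f fl (mca f fl s t) t)
    + dZero f fl (mca f fl s t) s + dZero f fl (mca f fl s t) t

/-- For u ∈ [0, Δ_s], the point `s_u = inf {t ∈ [s,1] : f t ≤ f s - u}`. -/
noncomputable def loopPoint (f : ℝ → ℝ) (s u : ℝ) : ℝ :=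
  sInf {t : ℝ | t ∈ Set.Icc s 1 ∧ f t ≤ f s - u}

/-!
The point `s_u` is the first time after `s` at which `f` hits the level `c = f(s) - u`: `f > c`
on `[s, s_u)` and `f(s_u) = c`. Hence `I_r^{s_u} = c` and, taking left limits, `c ≤ f(r-)` for
every `s < r ≤ s_u`. So `r ≼ s_u` forces `f(r-) = c`, i.e. `x_r^{s_u} = 0`, which gives
`d₀(s, s_u) = 0`; and for `u < u'` no `r > s` can be a common ancestor of `s_u` and `s_{u'}`,
since it would satisfy `f(s) - u ≤ f(r-) ≤ I_r^{s_{u'}} = f(s) - u'`. Thus `s_u ∧ s_{u'} = s` and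
`d(s_u, s_{u'}) = δ_{Δ_s}(Δ_s - u, Δ_s - u')`.
-/

open Topology

lemma cycleDist_comm (D a b : ℝ) : cycleDist D a b = cycleDist D b a := by
  rw [cycleDist, cycleDist, abs_sub_comm]

lemma cycleDist_self {D : ℝ} (hD : 0 ≤ D) (a : ℝ) : cycleDist D a a = 0 := by
  simp [cycleDist, hD]

lemma cycleDist_sub_sub (D e a b : ℝ) : cycleDist D (e - a) (e - b) = cycleDist D a b := by
  rw [cycleDist, cycleDist, sub_sub_sub_cancel_left, abs_sub_comm]

lemma le_of_tendsto_nhdsLT_of_forall_Ioo {f : ℝ → ℝ} {a r c L : ℝ}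
    (hL : Tendsto f (𝓝[<] r) (𝓝 L)) (har : a < r) (h : ∀ t ∈ Ioo a r, c ≤ f t) : c ≤ L :=
  ge_of_tendsto hL (Filter.mem_of_superset (Ioo_mem_nhdsLT har) h)

lemma isLeast_sInf_sublevel {f : ℝ → ℝ} {a b c : ℝ}
    (hf : ∀ t ∈ Ico a b, Tendsto f (𝓝[≥] t) (𝓝 (f t)))
    (hne : {t | t ∈ Icc a b ∧ f t ≤ c}.Nonempty) :
    IsLeast {t | t ∈ Icc a b ∧ f t ≤ c} (sInf {t | t ∈ Icc a b ∧ f t ≤ c}) := by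
  set S := {t | t ∈ Icc a b ∧ f t ≤ c}
  have hbdd : BddBelow S := ⟨a, fun t ht => ht.1.1⟩
  have hle : S ⊆ Ici (sInf S) := fun t ht => csInf_le hbdd ht
  have hcl : sInf S ∈ closure S := csInf_mem_closure hne hbdd
  have hIcc : sInf S ∈ Icc a b := closure_minimal (fun t ht => ht.1) isClosed_Icc hcl
  refine ⟨⟨hIcc, ?_⟩, hle⟩
  rcases hIcc.2.eq_or_lt with hb | hb
  · obtain ⟨t, ht⟩ := hne
    have htb : t = b := le_antisymm ht.1.2 (hb ▸ hle ht)
    exact hb ▸ htb ▸ ht.2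
  · have : (𝓝[S] sInf S).NeBot := mem_closure_iff_nhdsWithin_neBot.mp hcl
    exact le_of_tendsto ((hf _ ⟨hIcc.1, hb⟩).mono_left (nhdsWithin_mono _ hle))
      (eventually_mem_nhdsWithin.mono fun t ht => ht.2)

lemma infIcc_eq_right {f : ℝ → ℝ} {a b : ℝ} (hab : a ≤ b)
    (h : ∀ t ∈ Icc a b, f b ≤ f t) : infIcc f a b = f b :=
  IsLeast.csInf_eq ⟨mem_image_of_mem f ⟨hab, le_rfl⟩, forall_mem_image.mpr h⟩

lemma infIcc_self (f : ℝ → ℝ) (a : ℝ) : infIcc f a a = f a := by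
  rw [infIcc, Icc_self, image_singleton, csInf_singleton]

section Looptree

variable {f fl : ℝ → ℝ}

lemma left_lim_nonneg
    (hf_left : ∀ t ∈ Ioc (0:ℝ) 1, Tendsto f (𝓝[<] t) (𝓝 (fl t))) (hfl0 : fl 0 = 0)
    (hf_nonneg : ∀ t ∈ Icc (0:ℝ) 1, 0 ≤ f t) {s : ℝ} (hs : s ∈ Icc (0:ℝ) 1) :
    0 ≤ fl s := by
  rcases hs.1.eq_or_lt with rfl | h0
  · exact hfl0.ge
  · exact le_of_tendsto_nhdsLT_of_forall_Ioo (hf_left s ⟨h0, hs.2⟩) h0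
      fun t ht => hf_nonneg t ⟨ht.1.le, ht.2.le.trans hs.2⟩

lemma mca_comm (s t : ℝ) : mca f fl s t = mca f fl t s := by
  simp only [mca, and_comm]

lemma looptreeDist_comm (s t : ℝ) : looptreeDist f fl s t = looptreeDist f fl t s := by
  rw [looptreeDist, looptreeDist, mca_comm, cycleDist_comm, add_right_comm]

lemma mca_self {t : ℝ} (ht : t ∈ Icc (0:ℝ) 1) (hjump : fl t ≤ f t) : mca f fl t t = t := by
  have htt : Prec f fl t t := ⟨le_rfl, (infIcc_self f t).symm ▸ hjump⟩
  exact IsGreatest.csSup_eq ⟨⟨ht, htt, htt⟩, fun r hr => hr.2.1.1⟩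

lemma dZero_self (t : ℝ) : dZero f fl t t = 0 := by
  have : IsEmpty {r : ℝ // Prec f fl t r ∧ t ≠ r ∧ Prec f fl r t} :=
    ⟨fun ⟨_, htr, hne, hrt⟩ => hne (le_antisymm htr.1 hrt.1)⟩
  exact tsum_empty

lemma looptreeDist_self {t : ℝ} (ht : t ∈ Icc (0:ℝ) 1) (hjump : fl t ≤ f t) :
    looptreeDist f fl t t = 0 := by
  have hΔ : 0 ≤ jump f fl t := sub_nonneg.mpr hjump
  rw [looptreeDist, mca_self ht hjump, dZero_self, cycleDist_self hΔ, add_zero, add_zero]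

structure IsFirstHit (f : ℝ → ℝ) (s c p : ℝ) : Prop where
  le : s ≤ p
  apply_eq : f p = c
  lt_apply : ∀ t ∈ Ico s p, c < f t

namespace IsFirstHit

variable {s c p : ℝ}

lemma infIcc_eq (hp : IsFirstHit f s c p) {r : ℝ} (hr : r ∈ Icc s p) : infIcc f r p = c :=
  hp.apply_eq ▸ infIcc_eq_right hr.2 fun t ht => by
    rcases ht.2.eq_or_lt with rfl | htp
    · exact le_rfl
    · exact hp.apply_eq ▸ (hp.lt_apply t ⟨hr.1.trans ht.1, htp⟩).le

lemma le_left_lim (hp : IsFirstHit f s c p) {r : ℝ} (hL : Tendsto f (𝓝[<] r) (𝓝 (fl r)))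
    (hr : r ∈ Ioc s p) : c ≤ fl r :=
  le_of_tendsto_nhdsLT_of_forall_Ioo hL hr.1 fun t ht =>
    (hp.lt_apply t ⟨ht.1.le, ht.2.trans_le hr.2⟩).le

lemma prec (hp : IsFirstHit f s c p) (hc : fl s ≤ c) : Prec f fl s p :=
  ⟨hp.le, (hp.infIcc_eq ⟨le_rfl, hp.le⟩).symm ▸ hc⟩

lemma xpos_eq (hp : IsFirstHit f s c p) : xpos f fl s p = c - fl s := by
  rw [xpos, hp.infIcc_eq ⟨le_rfl, hp.le⟩]

lemma dZero_eq_zero (hp : IsFirstHit f s c p)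
    (hf_left : ∀ t ∈ Ioc (0:ℝ) 1, Tendsto f (𝓝[<] t) (𝓝 (fl t)))
    (hf_jump : ∀ t ∈ Icc (0:ℝ) 1, fl t ≤ f t) (hs : 0 ≤ s) (hp1 : p ≤ 1) :
    dZero f fl s p = 0 := by
  refine (tsum_congr fun r => ?_).trans tsum_zero
  obtain ⟨r, hsr, hne, hrp⟩ := r
  have hr : r ∈ Ioc s p := ⟨hsr.1.lt_of_ne hne, hrp.1⟩
  have hr1 : r ≤ 1 := hr.2.trans hp1
  have hr0 : 0 < r := hs.trans_lt hr.1
  have hfl : fl r = c := le_antisymm (hp.infIcc_eq ⟨hr.1.le, hr.2⟩ ▸ hrp.2)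
    (hp.le_left_lim (hf_left r ⟨hr0, hr1⟩) hr)
  have hx : xpos f fl r p = 0 := by rw [xpos, hp.infIcc_eq ⟨hr.1.le, hr.2⟩, hfl, sub_self]
  exact hx ▸ cycleDist_self (sub_nonneg.mpr (hf_jump r ⟨hr0.le, hr1⟩) : 0 ≤ jump f fl r) 0

lemma mca_eq {c' q : ℝ} (hp : IsFirstHit f s c p) (hq : IsFirstHit f s c' q)
    (hf_left : ∀ t ∈ Ioc (0:ℝ) 1, Tendsto f (𝓝[<] t) (𝓝 (fl t)))
    (hs : s ∈ Icc (0:ℝ) 1) (hq1 : q ≤ 1) (hcc' : c' < c) (hc' : fl s ≤ c') :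
    mca f fl p q = s := by
  refine IsGreatest.csSup_eq ⟨⟨hs, hp.prec (hc'.trans hcc'.le), hq.prec hc'⟩, ?_⟩
  rintro r ⟨-, hrp, hrq⟩
  by_contra! hsr
  have hr0 : 0 < r := hs.1.trans_lt hsr
  have hc_le : c ≤ fl r := hp.le_left_lim (hf_left r ⟨hr0, hrq.1.trans hq1⟩) ⟨hsr, hrp.1⟩
  have hle_c' : fl r ≤ c' := hq.infIcc_eq ⟨hsr.le, hrq.1⟩ ▸ hrq.2
  linarith

lemma looptreeDist_eq {c' q : ℝ} (hp : IsFirstHit f s c p) (hq : IsFirstHit f s c' q)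
    (hf_left : ∀ t ∈ Ioc (0:ℝ) 1, Tendsto f (𝓝[<] t) (𝓝 (fl t)))
    (hf_jump : ∀ t ∈ Icc (0:ℝ) 1, fl t ≤ f t)
    (hs : s ∈ Icc (0:ℝ) 1) (hp1 : p ≤ 1) (hq1 : q ≤ 1) (hcc' : c' < c) (hc' : fl s ≤ c') :
    looptreeDist f fl p q = cycleDist (jump f fl s) (c - fl s) (c' - fl s) := by
  rw [looptreeDist, hp.mca_eq hq hf_left hs hq1 hcc' hc', hp.xpos_eq, hq.xpos_eq,
    hp.dZero_eq_zero hf_left hf_jump hs.1 hp1, hq.dZero_eq_zero hf_left hf_jump hs.1 hq1,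
    add_zero, add_zero]

end IsFirstHit

variable {s u : ℝ}

lemma isLeast_loopPoint
    (hf_right : ∀ t ∈ Ico (0:ℝ) 1, Tendsto f (𝓝[≥] t) (𝓝 (f t)))
    (hs : s ∈ Icc (0:ℝ) 1) (h1 : f 1 ≤ f s - u) :
    IsLeast {t | t ∈ Icc s 1 ∧ f t ≤ f s - u} (loopPoint f s u) :=
  isLeast_sInf_sublevel (fun t ht => hf_right t ⟨hs.1.trans ht.1, ht.2⟩) ⟨1, ⟨hs.2, le_rfl⟩, h1⟩

lemma isFirstHit_loopPoint
    (hf_left : ∀ t ∈ Ioc (0:ℝ) 1, Tendsto f (𝓝[<] t) (𝓝 (fl t)))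
    (hf_jump : ∀ t ∈ Icc (0:ℝ) 1, fl t ≤ f t) (hs : 0 ≤ s) (hu : 0 ≤ u)
    (hleast : IsLeast {t | t ∈ Icc s 1 ∧ f t ≤ f s - u} (loopPoint f s u)) :
    IsFirstHit f s (f s - u) (loopPoint f s u) := by
  obtain ⟨⟨⟨hsp, hp1⟩, hfp⟩, hmin⟩ := hleast
  have lt_apply : ∀ t ∈ Ico s (loopPoint f s u), f s - u < f t := fun t ht =>
    not_le.mp fun hft => ht.2.not_ge (hmin ⟨⟨ht.1, ht.2.le.trans hp1⟩, hft⟩)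
  -- from below, `f(p) ≥ f(p-) ≥ f(s) - u` since `f > f(s) - u` on `[s, p)`
  have hfp' : f s - u ≤ f (loopPoint f s u) := by
    rcases hsp.eq_or_lt with hsp | hsp
    · rw [← hsp]; linarith
    · have hL := hf_left _ ⟨hs.trans_lt hsp, hp1⟩
      have hlim := le_of_tendsto_nhdsLT_of_forall_Ioo hL hsp fun t ht =>
        (lt_apply t ⟨ht.1.le, ht.2⟩).le
      exact hlim.trans (hf_jump _ ⟨hs.trans hsp.le, hp1⟩)
  exact ⟨hsp, le_antisymm hfp hfp', lt_apply⟩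

end Looptree

theorem looptree_loops_general (f fl : ℝ → ℝ)
    (hf_right : ∀ t ∈ Set.Ico (0:ℝ) 1, Filter.Tendsto f (nhdsWithin t (Set.Ici t)) (nhds (f t)))
    (hf_left : ∀ t ∈ Set.Ioc (0:ℝ) 1, Filter.Tendsto f (nhdsWithin t (Set.Iio t)) (nhds (fl t)))
    (hfl0 : fl 0 = 0)
    (hf_nonneg : ∀ t ∈ Set.Icc (0:ℝ) 1, 0 ≤ f t)
    (hf_jump : ∀ t ∈ Set.Icc (0:ℝ) 1, fl t ≤ f t)
    (hf1 : f 1 = 0)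
    (s : ℝ) (hs : s ∈ Set.Icc (0:ℝ) 1) :
    ∀ u ∈ Set.Icc (0:ℝ) (jump f fl s), ∀ u' ∈ Set.Icc (0:ℝ) (jump f fl s),
      {t : ℝ | t ∈ Set.Icc s 1 ∧ f t ≤ f s - u}.Nonempty ∧
      f (loopPoint f s u) = f s - u ∧
      looptreeDist f fl (loopPoint f s u) (loopPoint f s u')
        = min |u - u'| (jump f fl s - |u - u'|) := by
  have hfl := left_lim_nonneg hf_left hfl0 hf_nonneg hs
  have hlevel : ∀ u ∈ Icc (0:ℝ) (jump f fl s), fl s ≤ f s - u := fun u hu => by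
    rw [jump] at hu; linarith [hu.2]
  have hleast : ∀ u ∈ Icc (0:ℝ) (jump f fl s),
      IsLeast {t | t ∈ Icc s 1 ∧ f t ≤ f s - u} (loopPoint f s u) := fun u hu =>
    isLeast_loopPoint hf_right hs (hf1 ▸ hfl.trans (hlevel u hu))
  have hhit : ∀ u ∈ Icc (0:ℝ) (jump f fl s), IsFirstHit f s (f s - u) (loopPoint f s u) :=
    fun u hu => isFirstHit_loopPoint hf_left hf_jump hs.1 hu.1 (hleast u hu)
  have hlt : ∀ u ∈ Icc (0:ℝ) (jump f fl s), ∀ u' ∈ Icc (0:ℝ) (jump f fl s), u < u' →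
      looptreeDist f fl (loopPoint f s u) (loopPoint f s u') = cycleDist (jump f fl s) u u' :=
    fun u hu u' hu' huu' => by
      rw [(hhit u hu).looptreeDist_eq (hhit u' hu') hf_left hf_jump hs (hleast u hu).1.1.2
        (hleast u' hu').1.1.2 (by linarith) (hlevel u' hu'), sub_right_comm, sub_right_comm _ u',
        ← jump, cycleDist_sub_sub]
  intro u hu u' hu'
  refine ⟨(hleast u hu).nonempty, (hhit u hu).apply_eq, ?_⟩
  rcases lt_trichotomy u u' with huu' | rfl | huu'
  · exact hlt u hu u' hu' huu'
  · have hp := (hleast u hu).1.1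
    rw [looptreeDist_self ⟨hs.1.trans hp.1, hp.2⟩ (hf_jump _ ⟨hs.1.trans hp.1, hp.2⟩)]
    simp [hu.1.trans hu.2]
  · rw [looptreeDist_comm, hlt u' hu' u hu huu', cycleDist_comm, cycleDist]

/-- loops in the looptree: if Δ_s > 0 then for u, u' ∈ [0, Δ_s],
the set defining s_u is nonempty, f(s_u) = f(s) - u, and
d(s_u, s_{u'}) = min(|u - u'|, Δ_s - |u - u'|); in particular {s_u : u ∈ [0, Δ_s]}
equipped with d is isometric to a metric circle of length Δ_s. -/
theorem looptree_loops (f fl : ℝ → ℝ)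
    (hf_right : ∀ t ∈ Set.Ico (0:ℝ) 1, Filter.Tendsto f (nhdsWithin t (Set.Ici t)) (nhds (f t)))
    (hf_left : ∀ t ∈ Set.Ioc (0:ℝ) 1, Filter.Tendsto f (nhdsWithin t (Set.Iio t)) (nhds (fl t)))
    (hfl0 : fl 0 = 0)
    (hf_nonneg : ∀ t ∈ Set.Icc (0:ℝ) 1, 0 ≤ f t)
    (hf_jump : ∀ t ∈ Set.Icc (0:ℝ) 1, fl t ≤ f t)
    (hf0 : f 0 = 0) (hf1 : f 1 = 0)
    (s : ℝ) (hs : s ∈ Set.Icc (0:ℝ) 1) (hΔ : 0 < jump f fl s) :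
    ∀ u ∈ Set.Icc (0:ℝ) (jump f fl s), ∀ u' ∈ Set.Icc (0:ℝ) (jump f fl s),
      {t : ℝ | t ∈ Set.Icc s 1 ∧ f t ≤ f s - u}.Nonempty ∧
      f (loopPoint f s u) = f s - u ∧
      looptreeDist f fl (loopPoint f s u) (loopPoint f s u')
        = min |u - u'| (jump f fl s - |u - u'|) :=
  looptree_loops_general f fl hf_right hf_left hfl0 hf_nonneg hf_jump hf1 s hs
end

section
/- (Separation lemma used in the lower bound for the Hausdorff dimension.) Let T, u ∈ [0,1] with T ≺ u, and let v ∈ (u, 1] be such that inf_{[u,v]} f < f(T−). Then for every s ∈ [0,1] with s < T or s > v, one has d(s,u) ≥ min(x_T^u, Δ_T − x_T^u). -/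
open Set Filter

/-!
The most recent common ancestor `m = s ∧ u` is itself a common `≼`-lower bound of `s` and `u`:
this is where the left limits of `f` enter. It lies strictly below `T`, trivially when `s < T`;
when `s > v`, `T ≤ m` would give `f(m−) ≤ I_u^v < f(T−) ≤ I_T^u ≤ f(m−)`. Hence `m ≺ T ≼ u`, so
`T` contributes `δ_{Δ_T}(0, x_T^u) = min(x_T^u, Δ_T − x_T^u)` to `d₀(m, u)`, and all other terms
of `d(s, u)` are nonnegative. The series `d₀(m, u)` converges: for ancestors `r < r'` of `u` one
has `I_r^u ≤ f(r'−)`, so the finite sums of the `x_r^u = I_r^u − f(r−)` telescope to at most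
`f(u) − I_m^u`.
-/

open Topology

section

variable {f fl : ℝ → ℝ}

theorem infIcc_le (hf : BddBelow (f '' Icc 0 1)) {a b w : ℝ} (ha : 0 ≤ a) (hb : b ≤ 1)
    (hw : w ∈ Icc a b) : infIcc f a b ≤ f w :=
  csInf_le (hf.mono (image_mono (Icc_subset_Icc ha hb))) (mem_image_of_mem f hw)

theorem le_infIcc {a b c : ℝ} (hab : a ≤ b) (h : ∀ w ∈ Icc a b, c ≤ f w) :
    c ≤ infIcc f a b :=
  le_csInf ((nonempty_Icc.2 hab).image f) (forall_mem_image.2 h)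

theorem infIcc_le_infIcc (hf : BddBelow (f '' Icc 0 1)) {a b a' b' : ℝ} (ha : 0 ≤ a)
    (hb : b ≤ 1) (hsub : Icc a' b' ⊆ Icc a b) (hab' : a' ≤ b') :
    infIcc f a b ≤ infIcc f a' b' :=
  le_infIcc hab' fun _ hw => infIcc_le hf ha hb (hsub hw)

theorem infIcc_le_leftLim (hf : BddBelow (f '' Icc 0 1)) {a r b : ℝ}
    (hr : Tendsto f (𝓝[<] r) (𝓝 (fl r))) (ha : 0 ≤ a) (har : a < r) (hrb : r ≤ b)
    (hb : b ≤ 1) : infIcc f a b ≤ fl r :=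
  ge_of_tendsto hr <| by
    filter_upwards [Ioo_mem_nhdsLT har] with x hx
    exact infIcc_le hf ha hb ⟨hx.1.le, hx.2.le.trans hrb⟩

theorem cycleDist_nonneg {D a b : ℝ} (ha : a ∈ Icc 0 D) (hb : b ∈ Icc 0 D) :
    0 ≤ cycleDist D a b :=
  le_min (abs_nonneg _) (sub_nonneg.2 (abs_sub_le_of_nonneg_of_le ha.1 ha.2 hb.1 hb.2))

theorem cycleDist_zero_left {D x : ℝ} (hx : 0 ≤ x) : cycleDist D 0 x = min x (D - x) := by
  rw [cycleDist, zero_sub, abs_neg, abs_of_nonneg hx]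

theorem zero_prec (hf_nonneg : ∀ t ∈ Icc (0:ℝ) 1, 0 ≤ f t) (hfl0 : fl 0 = 0) {t : ℝ}
    (ht : t ∈ Icc (0:ℝ) 1) : Prec f fl 0 t :=
  ⟨ht.1, by rw [hfl0]; exact le_infIcc ht.1 fun w hw => hf_nonneg w ⟨hw.1, hw.2.trans ht.2⟩⟩

theorem Prec.prec_of_mem_Icc (hf : BddBelow (f '' Icc 0 1)) {m T u : ℝ} (h : Prec f fl m u)
    (hm : 0 ≤ m) (hu : u ≤ 1) (hT : T ∈ Icc m u) : Prec f fl m T :=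
  ⟨hT.1, h.2.trans (infIcc_le_infIcc hf hm hu (Icc_subset_Icc le_rfl hT.2) hT.1)⟩

theorem Prec.xpos_nonneg {r t : ℝ} (h : Prec f fl r t) : 0 ≤ xpos f fl r t :=
  sub_nonneg.2 h.2

theorem Prec.xpos_le_jump (hf : BddBelow (f '' Icc 0 1)) {r t : ℝ} (h : Prec f fl r t)
    (hr : 0 ≤ r) (ht : t ≤ 1) : xpos f fl r t ≤ jump f fl r :=
  sub_le_sub_right (infIcc_le hf hr ht ⟨le_rfl, h.1⟩) _

theorem Prec.cycleDist_nonneg (hf : BddBelow (f '' Icc 0 1)) {r t : ℝ} (h : Prec f fl r t)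
    (hr : 0 ≤ r) (ht : t ≤ 1) : 0 ≤ cycleDist (jump f fl r) 0 (xpos f fl r t) :=
  have hx : xpos f fl r t ∈ Icc 0 (jump f fl r) := ⟨h.xpos_nonneg, h.xpos_le_jump hf hr ht⟩
  _root_.cycleDist_nonneg ⟨le_rfl, hx.1.trans hx.2⟩ hx

theorem Prec.cycleDist_le_xpos {r t : ℝ} (h : Prec f fl r t) :
    cycleDist (jump f fl r) 0 (xpos f fl r t) ≤ xpos f fl r t :=
  (cycleDist_zero_left h.xpos_nonneg).trans_le (min_le_left _ _)

theorem sum_xpos_le (hf : BddBelow (f '' Icc 0 1))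
    (hf_left : ∀ t ∈ Ioc (0:ℝ) 1, Tendsto f (𝓝[<] t) (𝓝 (fl t))) {a u : ℝ} (F : Finset ℝ)
    (hF : ∀ r ∈ F, a < r ∧ Prec f fl r u) (ha : 0 ≤ a) (hau : a ≤ u) (hu : u ≤ 1) :
    ∑ r ∈ F, xpos f fl r u ≤ f u - infIcc f a u := by
  induction F using Finset.induction_on_min generalizing a with
  | empty => simpa using infIcc_le hf ha hu ⟨hau, le_rfl⟩
  | insert r F hrF ih =>
    obtain ⟨har, hru⟩ := hF r (Finset.mem_insert_self r F)
    have hsum := ih (fun r' hr' => ⟨hrF r' hr', (hF r' (Finset.mem_insert_of_mem hr')).2⟩)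
      (ha.trans har.le) hru.1
    have hcross := infIcc_le_leftLim hf (hf_left r ⟨ha.trans_lt har, hru.1.trans hu⟩) ha har
      hru.1 hu
    rw [Finset.sum_insert fun h => (hrF r h).false, xpos]
    linarith

theorem summable_dZero (hf : BddBelow (f '' Icc 0 1))
    (hf_left : ∀ t ∈ Ioc (0:ℝ) 1, Tendsto f (𝓝[<] t) (𝓝 (fl t))) {m u : ℝ} (hm : 0 ≤ m)
    (hmu : m ≤ u) (hu : u ≤ 1) :
    Summable fun r : {r : ℝ // Prec f fl m r ∧ m ≠ r ∧ Prec f fl r u} =>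
      cycleDist (jump f fl r.1) 0 (xpos f fl r.1 u) := by
  refine summable_of_sum_le (c := f u - infIcc f m u)
    (fun r => r.2.2.2.cycleDist_nonneg hf (hm.trans r.2.1.1) hu) fun G => ?_
  calc ∑ r ∈ G, cycleDist (jump f fl r.1) 0 (xpos f fl r.1 u)
      ≤ ∑ r ∈ G, xpos f fl r.1 u := Finset.sum_le_sum fun r _ => r.2.2.2.cycleDist_le_xpos
    _ = ∑ r ∈ G.map (Function.Embedding.subtype _), xpos f fl r u := by
      rw [Finset.sum_map]; rfl
    _ ≤ f u - infIcc f m u := by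
      refine sum_xpos_le hf hf_left _ (fun r hr => ?_) hm hmu hu
      obtain ⟨r, -, rfl⟩ := Finset.mem_map.1 hr
      exact ⟨lt_of_le_of_ne r.2.1.1 r.2.2.1, r.2.2.2⟩

theorem dZero_nonneg (hf : BddBelow (f '' Icc 0 1)) {m u : ℝ} (hm : 0 ≤ m) (hu : u ≤ 1) :
    0 ≤ dZero f fl m u :=
  tsum_nonneg fun r => r.2.2.2.cycleDist_nonneg hf (hm.trans r.2.1.1) hu

theorem cycleDist_le_dZero (hf : BddBelow (f '' Icc 0 1))
    (hf_left : ∀ t ∈ Ioc (0:ℝ) 1, Tendsto f (𝓝[<] t) (𝓝 (fl t))) {m T u : ℝ} (hm : 0 ≤ m)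
    (hmT : Prec f fl m T) (hne : m ≠ T) (hTu : Prec f fl T u) (hu : u ≤ 1) :
    cycleDist (jump f fl T) 0 (xpos f fl T u) ≤ dZero f fl m u :=
  (summable_dZero hf hf_left hm (hmT.1.trans hTu.1) hu).le_tsum ⟨T, hmT, hne, hTu⟩
    fun r _ => r.2.2.2.cycleDist_nonneg hf (hm.trans r.2.1.1) hu

theorem leftLim_le_of_forall_exists {m b : ℝ} (hm : Tendsto f (𝓝[<] m) (𝓝 (fl m)))
    (h : ∀ c < m, ∃ r ∈ Ioo c m, Tendsto f (𝓝[<] r) (𝓝 (fl r)) ∧ fl r ≤ b) : fl m ≤ b := by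
  refine le_of_forall_pos_le_add fun ε hε => isClosed_Iic.mem_of_frequently_of_tendsto ?_ hm
  refine frequently_iff.2 fun hU => ?_
  obtain ⟨c, hc, hcU⟩ := mem_nhdsLT_iff_exists_Ioo_subset.1 hU
  obtain ⟨r, hr, hr_lim, hrb⟩ := h c hc
  obtain ⟨x, hx, hxr⟩ := ((hr_lim.eventually (eventually_lt_nhds (lt_add_of_pos_right _ hε))).and
    (Ioo_mem_nhdsLT hr.1)).exists
  exact ⟨x, hcU ⟨hxr.1, hxr.2.trans hr.2⟩, mem_Iic.2 (by linarith)⟩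

theorem prec_sSup (hf : BddBelow (f '' Icc 0 1))
    (hf_left : ∀ t ∈ Ioc (0:ℝ) 1, Tendsto f (𝓝[<] t) (𝓝 (fl t))) {A : Set ℝ}
    (hA : A.Nonempty) (hA1 : A ⊆ Icc 0 1) {t : ℝ} (ht : t ≤ 1) (hAt : ∀ r ∈ A, Prec f fl r t) :
    Prec f fl (sSup A) t := by
  have hbdd : BddAbove A := ⟨1, fun r hr => (hA1 hr).2⟩
  have hmt : sSup A ≤ t := csSup_le hA fun r hr => (hAt r hr).1
  refine ⟨hmt, ?_⟩
  by_cases hmA : sSup A ∈ A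
  · exact (hAt _ hmA).2
  have lt_sSup : ∀ r ∈ A, r < sSup A := fun r hr =>
    (le_csSup hbdd hr).lt_of_ne (ne_of_mem_of_not_mem hr hmA)
  have hm0 : 0 < sSup A := (hA1 hA.some_mem).1.trans_lt (lt_sSup _ hA.some_mem)
  refine le_infIcc hmt fun w hw =>
    leftLim_le_of_forall_exists (hf_left _ ⟨hm0, hmt.trans ht⟩) fun c hc => ?_
  obtain ⟨r, hrA, hcr⟩ := exists_lt_of_lt_csSup hA (max_lt hc hm0)
  exact ⟨r, ⟨(le_max_left _ _).trans_lt hcr, lt_sSup r hrA⟩,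
    hf_left r ⟨(le_max_right _ _).trans_lt hcr, (hA1 hrA).2⟩,
    (hAt r hrA).2.trans (infIcc_le hf (hA1 hrA).1 ht ⟨(lt_sSup r hrA).le.trans hw.1, hw.2⟩)⟩

theorem mca_nonneg (hf_nonneg : ∀ t ∈ Icc (0:ℝ) 1, 0 ≤ f t) (hfl0 : fl 0 = 0) {s u : ℝ}
    (hs : s ∈ Icc (0:ℝ) 1) (hu : u ∈ Icc (0:ℝ) 1) : 0 ≤ mca f fl s u :=
  le_csSup ⟨1, fun _ hr => hr.1.2⟩
    ⟨⟨le_rfl, zero_le_one⟩, zero_prec hf_nonneg hfl0 hs, zero_prec hf_nonneg hfl0 hu⟩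

theorem prec_mca (hf_nonneg : ∀ t ∈ Icc (0:ℝ) 1, 0 ≤ f t) (hfl0 : fl 0 = 0)
    (hf_left : ∀ t ∈ Ioc (0:ℝ) 1, Tendsto f (𝓝[<] t) (𝓝 (fl t))) {s u : ℝ}
    (hs : s ∈ Icc (0:ℝ) 1) (hu : u ∈ Icc (0:ℝ) 1) :
    Prec f fl (mca f fl s u) s ∧ Prec f fl (mca f fl s u) u := by
  have hf : BddBelow (f '' Icc 0 1) := ⟨0, forall_mem_image.2 hf_nonneg⟩
  have hA : (0:ℝ) ∈ {r | r ∈ Icc (0:ℝ) 1 ∧ Prec f fl r s ∧ Prec f fl r u} :=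
    ⟨⟨le_rfl, zero_le_one⟩, zero_prec hf_nonneg hfl0 hs, zero_prec hf_nonneg hfl0 hu⟩
  exact ⟨prec_sSup hf hf_left ⟨0, hA⟩ (fun _ hr => hr.1) hs.2 fun _ hr => hr.2.1,
    prec_sSup hf hf_left ⟨0, hA⟩ (fun _ hr => hr.1) hu.2 fun _ hr => hr.2.2⟩

theorem lt_of_prec_of_infIcc_lt (hf : BddBelow (f '' Icc 0 1))
    (hf_left : ∀ t ∈ Ioc (0:ℝ) 1, Tendsto f (𝓝[<] t) (𝓝 (fl t))) {m s T u v : ℝ} (hm : 0 ≤ m)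
    (hms : Prec f fl m s) (hmu : Prec f fl m u) (hT : 0 ≤ T) (hTu : Prec f fl T u)
    (huv : u ≤ v) (hvs : v ≤ s) (hs : s ≤ 1) (hinf : infIcc f u v < fl T) : m < T := by
  by_contra! hTm
  have hm_lt : fl m < fl T :=
    (hms.2.trans (infIcc_le_infIcc hf hm hs (Icc_subset_Icc hmu.1 hvs) huv)).trans_lt hinf
  rcases hTm.eq_or_lt with rfl | hlt
  · exact hm_lt.false
  · have hu : u ≤ 1 := huv.trans (hvs.trans hs)
    exact (hTu.2.trans (infIcc_le_leftLim hf (hf_left m ⟨hT.trans_lt hlt, hmu.1.trans hu⟩) hT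
      hlt hmu.1 hu)).not_gt hm_lt

theorem dZero_mca_le_looptreeDist (hf : BddBelow (f '' Icc 0 1)) {s u : ℝ}
    (hm : 0 ≤ mca f fl s u) (hms : Prec f fl (mca f fl s u) s)
    (hmu : Prec f fl (mca f fl s u) u) (hs : s ≤ 1) (hu : u ≤ 1) :
    dZero f fl (mca f fl s u) u ≤ looptreeDist f fl s u := by
  have h_cycle := cycleDist_nonneg ⟨hms.xpos_nonneg, hms.xpos_le_jump hf hm hs⟩
    ⟨hmu.xpos_nonneg, hmu.xpos_le_jump hf hm hu⟩
  have h_dZero : 0 ≤ dZero f fl (mca f fl s u) s := dZero_nonneg hf hm hs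
  rw [looptreeDist]
  linarith

end

theorem looptreeDist_separation_general (f fl : ℝ → ℝ)
    (hf_left : ∀ t ∈ Set.Ioc (0:ℝ) 1, Filter.Tendsto f (nhdsWithin t (Set.Iio t)) (nhds (fl t)))
    (hfl0 : fl 0 = 0)
    (hf_nonneg : ∀ t ∈ Set.Icc (0:ℝ) 1, 0 ≤ f t)
    (T u v : ℝ) (hT : T ∈ Set.Icc (0:ℝ) 1) (hu : u ∈ Set.Icc (0:ℝ) 1)
    (hTu : Prec f fl T u)
    (hv : v ∈ Set.Ioc u 1) (hinf : infIcc f u v < fl T) :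
    ∀ s ∈ Set.Icc (0:ℝ) 1, (s < T ∨ v < s) →
      min (xpos f fl T u) (jump f fl T - xpos f fl T u) ≤ looptreeDist f fl s u := by
  intro s hs hs_out
  have hf : BddBelow (f '' Icc 0 1) := ⟨0, forall_mem_image.2 hf_nonneg⟩
  have hm := mca_nonneg hf_nonneg hfl0 hs hu
  obtain ⟨hms, hmu⟩ := prec_mca hf_nonneg hfl0 hf_left hs hu
  have hmT : mca f fl s u < T := by
    rcases hs_out with hsT | hvs
    · exact hms.1.trans_lt hsT
    · exact lt_of_prec_of_infIcc_lt hf hf_left hm hms hmu hT.1 hTu hv.1.le hvs.le hs.2 hinf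
  calc min (xpos f fl T u) (jump f fl T - xpos f fl T u)
      = cycleDist (jump f fl T) 0 (xpos f fl T u) := (cycleDist_zero_left hTu.xpos_nonneg).symm
    _ ≤ dZero f fl (mca f fl s u) u :=
      cycleDist_le_dZero hf hf_left hm (hmu.prec_of_mem_Icc hf hm hu.2 ⟨hmT.le, hTu.1⟩) hmT.ne
        hTu hu.2
    _ ≤ looptreeDist f fl s u := dZero_mca_le_looptreeDist hf hm hms hmu hs.2 hu.2

/-- separation lemma used in the lower bound for the Hausdorff
dimension: if T ≺ u, v ∈ (u,1] and inf_{[u,v]} f < f(T-), then for every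
s ∈ [0,1] with s < T or s > v one has d(s,u) ≥ min(x_T^u, Δ_T - x_T^u). -/
theorem looptreeDist_separation (f fl : ℝ → ℝ)
    (hf_right : ∀ t ∈ Set.Ico (0:ℝ) 1, Filter.Tendsto f (nhdsWithin t (Set.Ici t)) (nhds (f t)))
    (hf_left : ∀ t ∈ Set.Ioc (0:ℝ) 1, Filter.Tendsto f (nhdsWithin t (Set.Iio t)) (nhds (fl t)))
    (hfl0 : fl 0 = 0)
    (hf_nonneg : ∀ t ∈ Set.Icc (0:ℝ) 1, 0 ≤ f t)
    (hf_jump : ∀ t ∈ Set.Icc (0:ℝ) 1, fl t ≤ f t)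
    (hf0 : f 0 = 0) (hf1 : f 1 = 0)
    (T u v : ℝ) (hT : T ∈ Set.Icc (0:ℝ) 1) (hu : u ∈ Set.Icc (0:ℝ) 1)
    (hTu : Prec f fl T u) (hTu' : T ≠ u)
    (hv : v ∈ Set.Ioc u 1) (hinf : infIcc f u v < fl T) :
    ∀ s ∈ Set.Icc (0:ℝ) 1, (s < T ∨ v < s) →
      min (xpos f fl T u) (jump f fl T - xpos f fl T u) ≤ looptreeDist f fl s u :=
  looptreeDist_separation_general f fl hf_left hfl0 hf_nonneg T u v hT hu hTu hv hinf
end
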